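/- arXiv:1005.5269 — 2 statements merged into one kernel-verified Lean document; each statement's English description precedes it below -/
import Mathlib

section
/- For any complex numbers a, b (representing f_s and f_t) and real φ' ≠ 0 with s > 0 and J := (1/s)·Im(b·conj(a)) > 0, the inequality (s|a|² + s^{-1}|b|²)/(2 Im(b·conj(a))) ≥ s·φ' + (1 - s²φ'²)·|b|²/(2 s² J) holds, with equality if and only if a = -i·φ'·b. -/
/-!
The difference of the two sides is a completed square:
`LHS - RHS = s ‖a + i φ' b‖² / (2 Im (b ā))`, since
`‖a + i φ' b‖² = ‖a‖² + φ'² ‖b‖² - 2 φ' Im (b ā)`.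
It is nonnegative because `Im (b ā) > 0`, and vanishes exactly when `a = -i φ' b`.
-/

open Complex

theorem Complex.sq_norm_add_I_mul_ofReal_mul (a b : ℂ) (t : ℝ) :
    ‖a + I * t * b‖ ^ 2 = ‖a‖ ^ 2 + t ^ 2 * ‖b‖ ^ 2 - 2 * t * (b * (starRingEnd ℂ) a).im := by
  simp only [Complex.sq_norm, normSq_apply, add_re, add_im, mul_re, mul_im, I_re, I_im, ofReal_re,
    ofReal_im, conj_re, conj_im]
  ring

theorem distortion_sub_eq (A B J s t : ℝ) (hs : s ≠ 0) (hJ : J ≠ 0) :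
    (s * A + s⁻¹ * B) / (2 * J) - (s * t + (1 - s ^ 2 * t ^ 2) * B / (2 * s ^ 2 * ((1 / s) * J)))
      = s * (A + t ^ 2 * B - 2 * t * J) / (2 * J) := by
  field_simp
  ring

theorem stmt3_general (a b : ℂ) (s φ' : ℝ) (hs : 0 < s)
    (hJ : 0 < (1 / s) * (b * (starRingEnd ℂ) a).im) :
    (s * ‖a‖ ^ 2 + s⁻¹ * ‖b‖ ^ 2) / (2 * (b * (starRingEnd ℂ) a).im)
      ≥ s * φ' + (1 - s ^ 2 * φ' ^ 2) * ‖b‖ ^ 2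
          / (2 * s ^ 2 * ((1 / s) * (b * (starRingEnd ℂ) a).im)) ∧
    ((s * ‖a‖ ^ 2 + s⁻¹ * ‖b‖ ^ 2) / (2 * (b * (starRingEnd ℂ) a).im)
      = s * φ' + (1 - s ^ 2 * φ' ^ 2) * ‖b‖ ^ 2
          / (2 * s ^ 2 * ((1 / s) * (b * (starRingEnd ℂ) a).im))
      ↔ a = -Complex.I * φ' * b) := by
  set J := (b * (starRingEnd ℂ) a).im
  have hJ_pos : 0 < J := pos_of_mul_pos_right hJ (one_div_pos.mpr hs).le
  have key := distortion_sub_eq (‖a‖ ^ 2) (‖b‖ ^ 2) J s φ' hs.ne' hJ_pos.ne'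
  rw [← sq_norm_add_I_mul_ofReal_mul] at key
  refine ⟨sub_nonneg.mp (key ▸ by positivity), ?_⟩
  rw [← sub_eq_zero, key]
  simp [hs.ne', hJ_pos.ne', add_eq_zero_iff_eq_neg]

/-- pointwise distortion inequality, first form, with equality iff a = -i φ' b. -/
theorem stmt3 (a b : ℂ) (s φ' : ℝ) (hφ : φ' ≠ 0) (hs : 0 < s)
    (hJ : 0 < (1 / s) * (b * (starRingEnd ℂ) a).im) :
    (s * ‖a‖ ^ 2 + s⁻¹ * ‖b‖ ^ 2) / (2 * (b * (starRingEnd ℂ) a).im)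
      ≥ s * φ' + (1 - s ^ 2 * φ' ^ 2) * ‖b‖ ^ 2
          / (2 * s ^ 2 * ((1 / s) * (b * (starRingEnd ℂ) a).im)) ∧
    ((s * ‖a‖ ^ 2 + s⁻¹ * ‖b‖ ^ 2) / (2 * (b * (starRingEnd ℂ) a).im)
      = s * φ' + (1 - s ^ 2 * φ' ^ 2) * ‖b‖ ^ 2
          / (2 * s ^ 2 * ((1 / s) * (b * (starRingEnd ℂ) a).im))
      ↔ a = -Complex.I * φ' * b) :=
  stmt3_general a b s φ' hs hJ
end

section
/- With the hypotheses of the previous statement (r < r', s_n ∈ (τ,σ) solving exp(∫_σ^{s_n} ρ(y)dy/√(y²ρ(y)² - τ²ρ(τ)²)) = r(s_n/τ)^n for each large n), the sequence satisfies lim_{n→∞} n(s_n - τ) = τ·log(r'/r); in particular s_n → τ. -/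
open Set intervalIntegral Filter
open Asymptotics Topology

/-! With `aₙ = log (sₙ / τ)` and `F s = ∫_σ^s f`, taking logarithms gives `n aₙ = F (sₙ) - log r`.
Since `F` is continuous, hence bounded, on `[τ, σ]`, this forces `aₙ = O(1/n)` and so `sₙ → τ`;
continuity of `F` at `τ` then upgrades it to `n aₙ → log r' - log r`, and
`sₙ - τ = τ (e^{aₙ} - 1)` with `e^{aₙ} - 1 = aₙ + O(aₙ²)`. -/

theorem tendsto_zero_of_natCast_mul_isBigO_one {a : ℕ → ℝ}
    (h : (fun n : ℕ => (n : ℝ) * a n) =O[atTop] fun _ => (1 : ℝ)) :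
    Tendsto a atTop (𝓝 0) := by
  refine (h.mul (isBigO_refl (fun n : ℕ => (n : ℝ)⁻¹) atTop)).congr' ?_ (by simp)
    |>.trans_tendsto tendsto_inv_atTop_nhds_zero_nat
  filter_upwards [eventually_ne_atTop 0] with n hn
  field_simp

theorem tendsto_natCast_mul_exp_sub_one {a : ℕ → ℝ} {L : ℝ}
    (h : Tendsto (fun n : ℕ => (n : ℝ) * a n) atTop (𝓝 L)) :
    Tendsto (fun n : ℕ => (n : ℝ) * (Real.exp (a n) - 1)) atTop (𝓝 L) := by
  have ha : Tendsto a atTop (𝓝 0) := tendsto_zero_of_natCast_mul_isBigO_one (h.isBigO_one ℝ)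
  -- `|eˣ - 1 - x| ≤ x²` makes the error `n (e^{aₙ} - 1 - aₙ)` at most `(n aₙ) aₙ → L · 0`.
  have herr : Tendsto (fun n : ℕ => (n : ℝ) * (Real.exp (a n) - 1 - a n)) atTop (𝓝 0) := by
    refine squeeze_zero_norm' ?_ (by simpa using h.mul ha)
    filter_upwards [ha.eventually (Metric.closedBall_mem_nhds 0 one_pos)] with n hn
    rw [dist_zero_right, Real.norm_eq_abs] at hn
    rw [norm_mul, Real.norm_natCast, Real.norm_eq_abs, mul_assoc, ← sq]
    exact mul_le_mul_of_nonneg_left (Real.abs_exp_sub_one_sub_id_le hn) n.cast_nonneg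
  simpa [mul_sub] using herr.add h

theorem tendsto_natCast_mul_sub_of_tendsto_natCast_mul_log_div {s : ℕ → ℝ} {τ L : ℝ}
    (hτ : 0 < τ) (hs : ∀ᶠ n in atTop, 0 < s n)
    (h : Tendsto (fun n : ℕ => (n : ℝ) * Real.log (s n / τ)) atTop (𝓝 L)) :
    Tendsto (fun n : ℕ => (n : ℝ) * (s n - τ)) atTop (𝓝 (τ * L)) := by
  refine ((tendsto_natCast_mul_exp_sub_one h).const_mul τ).congr' ?_
  filter_upwards [hs] with n hn
  rw [Real.exp_log (div_pos hn hτ)]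
  field_simp

theorem tendsto_of_natCast_mul_log_div_eq {F : ℝ → ℝ} {s : ℕ → ℝ} {τ σ c : ℝ} (hτ : 0 < τ)
    (hF : ContinuousOn F (Icc τ σ))
    (hs : ∀ᶠ n : ℕ in atTop, s n ∈ Icc τ σ ∧ (n : ℝ) * Real.log (s n / τ) = F (s n) - c) :
    Tendsto (fun n : ℕ => (n : ℝ) * (s n - τ)) atTop (𝓝 (τ * (F τ - c))) ∧
      Tendsto s atTop (𝓝 τ) := by
  have hpos : ∀ᶠ n in atTop, 0 < s n := hs.mono fun n hn => hτ.trans_le hn.1.1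
  obtain ⟨C, hC⟩ := isCompact_Icc.exists_bound_of_continuousOn hF
  have hbdd : (fun n : ℕ => (n : ℝ) * Real.log (s n / τ)) =O[atTop] fun _ => (1 : ℝ) := by
    refine ((IsBigO.of_bound C ?_).sub (isBigO_const_one ℝ c atTop)).congr'
      (hs.mono fun n hn => hn.2.symm) EventuallyEq.rfl
    filter_upwards [hs] with n hn
    simpa using hC _ hn.1
  have hlim : Tendsto s atTop (𝓝 τ) := by
    have := ((Real.continuous_exp.tendsto 0).comp
      (tendsto_zero_of_natCast_mul_isBigO_one hbdd)).const_mul τ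
    rw [Real.exp_zero, mul_one] at this
    refine this.congr' ?_
    filter_upwards [hpos] with n hn
    simp [Real.exp_log (div_pos hn hτ), mul_div_cancel₀ _ hτ.ne']
  have hτσ : τ ∈ Icc τ σ := by
    obtain ⟨n, hn⟩ := hs.exists
    exact ⟨le_rfl, hn.1.1.trans hn.1.2⟩
  have hFs : Tendsto (fun n => F (s n)) atTop (𝓝 (F τ)) :=
    (hF τ hτσ).tendsto.comp (tendsto_nhdsWithin_iff.2 ⟨hlim, hs.mono fun n hn => hn.1⟩)
  exact ⟨tendsto_natCast_mul_sub_of_tendsto_natCast_mul_log_div hτ hpos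
    ((hFs.sub_const c).congr' (hs.mono fun n hn => hn.2.symm)), hlim⟩

theorem natCast_mul_log_eq_of_exp_eq {x r q : ℝ} {n : ℕ} (hr : 0 < r) (hq : 0 < q)
    (h : Real.exp x = r * q ^ n) : (n : ℝ) * Real.log q = x - Real.log r := by
  have := congrArg Real.log h
  rw [Real.log_exp, Real.log_mul hr.ne' (pow_pos hq n).ne', Real.log_pow] at this
  linarith

theorem stmt18_general (τ σ r : ℝ) (hτ : 0 < τ) (hτσ : τ < σ) (hr0 : 0 < r)
    (ρ : ℝ → ℝ) (r' : ℝ)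
    (hr' : r' = Real.exp (∫ y in σ..τ,
      ρ y / Real.sqrt (y ^ 2 * ρ y ^ 2 - τ ^ 2 * ρ τ ^ 2)))
    (hr'1 : r' < 1) (sn : ℕ → ℝ)
    (hsn : ∀ᶠ n : ℕ in atTop, sn n ∈ Ioo τ σ ∧
      Real.exp (∫ y in σ..(sn n), ρ y / Real.sqrt (y ^ 2 * ρ y ^ 2 - τ ^ 2 * ρ τ ^ 2))
        = r * (sn n / τ) ^ n) :
    Tendsto (fun n : ℕ => (n : ℝ) * (sn n - τ)) atTop (nhds (τ * Real.log (r' / r))) ∧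
      Tendsto sn atTop (nhds τ) := by
  set f : ℝ → ℝ := fun y => ρ y / Real.sqrt (y ^ 2 * ρ y ^ 2 - τ ^ 2 * ρ τ ^ 2)
  -- `r' < 1` rules out the junk value `0` of a non-integrable integral.
  have hf : IntervalIntegrable f MeasureTheory.volume σ τ :=
    intervalIntegrable_of_integral_ne_zero fun h => by
      rw [h, Real.exp_zero] at hr'
      exact hr'1.ne hr'
  have hF : ContinuousOn (fun s => ∫ y in σ..s, f y) (Icc τ σ) := by
    simpa [uIcc_of_ge hτσ.le] using continuousOn_primitive_interval' hf left_mem_uIcc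
  have hlog : Real.log r' - Real.log r = Real.log (r' / r) :=
    (Real.log_div (hr' ▸ Real.exp_pos _).ne' hr0.ne').symm
  rw [← hlog, hr', Real.log_exp]
  exact tendsto_of_natCast_mul_log_div_eq hτ hF <| hsn.mono fun n hn =>
    ⟨Ioo_subset_Icc_self hn.1,
      natCast_mul_log_eq_of_exp_eq hr0 (div_pos (hτ.trans hn.1.1) hτ) hn.2⟩

/-- If s_n ∈ (τ,σ) solves exp(∫_σ^{s_n} ρ/√(y²ρ²-τ²ρ(τ)²)) = r(s_n/τ)^n
for all large n, then n(s_n - τ) → τ log(r'/r); in particular s_n → τ. -/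
theorem stmt18 (τ σ r : ℝ) (hτ : 0 < τ) (hτσ : τ < σ) (hr0 : 0 < r) (hr1 : r < 1)
    (ρ : ℝ → ℝ) (hρc : ContinuousOn ρ (Icc τ σ)) (hρ : ∀ y ∈ Icc τ σ, 0 < ρ y)
    (hmaj : ∀ y ∈ Ioc τ σ, τ ^ 2 * ρ τ ^ 2 < y ^ 2 * ρ y ^ 2)
    (hint : IntervalIntegrable
      (fun y => ρ y / Real.sqrt (y ^ 2 * ρ y ^ 2 - τ ^ 2 * ρ τ ^ 2)) volume σ τ)
    (r' : ℝ)
    (hr' : r' = Real.exp (∫ y in σ..τ,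
      ρ y / Real.sqrt (y ^ 2 * ρ y ^ 2 - τ ^ 2 * ρ τ ^ 2)))
    (hrr' : r < r') (hr'1 : r' < 1)
    (sn : ℕ → ℝ)
    (hsn : ∀ᶠ n : ℕ in atTop, sn n ∈ Ioo τ σ ∧
      Real.exp (∫ y in σ..(sn n), ρ y / Real.sqrt (y ^ 2 * ρ y ^ 2 - τ ^ 2 * ρ τ ^ 2))
        = r * (sn n / τ) ^ n) :
    Tendsto (fun n : ℕ => (n : ℝ) * (sn n - τ)) atTop (nhds (τ * Real.log (r' / r))) ∧
      Tendsto sn atTop (nhds τ) :=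
  stmt18_general τ σ r hτ hτσ hr0 ρ r' hr' hr'1 sn hsn
end
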